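/- Let W ∈ ℝ^{n×n} be symmetric doubly stochastic, let η ∈ (0,1], and set W_η := I − η(I − W). Let ω ≥ 0, and let X, Y, H, X̃ be square-integrable random n×m matrices with E[‖X − X̃‖²] ≤ ω·E[‖X − H‖²]. Set X⁺ := W_η·X − η·Y + η(I − W)(X − X̃). Then E[‖X⁺ − X‖²] ≤ 12·E[‖X − X̄‖²] + 3η²·E[‖Y‖²] + 12η²ω·E[‖X − H‖²]. -/

import Mathlib

/-!
Since `W` has unit row sums it fixes the consensus matrix `X̄`, so
`X⁺ - X = -η (I - W)(X - X̄) - η Y + η (I - W)(X - X̃)`.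
For doubly stochastic `W`, Jensen's inequality in each row and the unit column sums give
`‖W M‖ ≤ ‖M‖`, hence `‖(I - W) M‖² ≤ 4 ‖M‖²`. Together with
`‖A + B + C‖² ≤ 3 (‖A‖² + ‖B‖² + ‖C‖²)` and `η² ≤ 1` this bounds `‖X⁺ - X‖²` pointwise;
integrating and using the compression bound gives the claim.
-/

open MeasureTheory Finset

/-- Squared Frobenius norm of a real matrix. -/
def frobSq {n m : ℕ} (M : Matrix (Fin n) (Fin m) ℝ) : ℝ := ∑ i, ∑ j, (M i j) ^ 2

/-- The matrix each of whose rows is the average of the rows of `M`. -/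
noncomputable def rowAvg {n m : ℕ} (M : Matrix (Fin n) (Fin m) ℝ) :
    Matrix (Fin n) (Fin m) ℝ :=
  Matrix.of fun _ j => (n : ℝ)⁻¹ * ∑ i, M i j

section FrobeniusBounds

variable {n m : ℕ}

lemma frobSq_nonneg (M : Matrix (Fin n) (Fin m) ℝ) : 0 ≤ frobSq M := by
  unfold frobSq
  positivity

lemma frobSq_smul (c : ℝ) (M : Matrix (Fin n) (Fin m) ℝ) :
    frobSq (c • M) = c ^ 2 * frobSq M := by
  simp only [frobSq, Matrix.smul_apply, smul_eq_mul, mul_pow, mul_sum]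

lemma frobSq_sub_le (A B : Matrix (Fin n) (Fin m) ℝ) :
    frobSq (A - B) ≤ 2 * frobSq A + 2 * frobSq B := by
  simp only [frobSq, mul_sum, ← sum_add_distrib, Matrix.sub_apply]
  gcongr with i _ j _
  nlinarith [sq_nonneg (A i j + B i j)]

lemma frobSq_add_add_le (A B C : Matrix (Fin n) (Fin m) ℝ) :
    frobSq (A + B + C) ≤ 3 * frobSq A + 3 * frobSq B + 3 * frobSq C := by
  simp only [frobSq, mul_sum, ← sum_add_distrib, Matrix.add_apply]
  gcongr with i _ j _
  nlinarith [sq_nonneg (A i j - B i j), sq_nonneg (A i j - C i j), sq_nonneg (B i j - C i j)]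

lemma frobSq_mul_le_of_mem_doublyStochastic {W : Matrix (Fin n) (Fin n) ℝ}
    (hW : W ∈ doublyStochastic ℝ (Fin n)) (M : Matrix (Fin n) (Fin m) ℝ) :
    frobSq (W * M) ≤ frobSq M := by
  unfold frobSq
  rw [sum_comm]
  calc ∑ j, ∑ i, (W * M) i j ^ 2 ≤ ∑ j, ∑ i, ∑ k, W i k * M k j ^ 2 := by
        gcongr with j _ i _
        exact (even_two.convexOn_pow).map_sum_le (fun k _ => hW.1 i k)
          (sum_row_of_mem_doublyStochastic hW i) (fun _ _ => Set.mem_univ _)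
    _ = ∑ j, ∑ k, (∑ i, W i k) * M k j ^ 2 := by
        simp only [sum_mul]
        exact sum_congr rfl fun _ _ => sum_comm
    _ = ∑ k, ∑ j, M k j ^ 2 := by
        simp only [sum_col_of_mem_doublyStochastic hW, one_mul]
        exact sum_comm

lemma frobSq_one_sub_mul_le {W : Matrix (Fin n) (Fin n) ℝ}
    (hW : W ∈ doublyStochastic ℝ (Fin n)) (M : Matrix (Fin n) (Fin m) ℝ) :
    frobSq ((1 - W) * M) ≤ 4 * frobSq M := by
  rw [Matrix.sub_mul, Matrix.one_mul]
  linarith [frobSq_sub_le M (W * M), frobSq_mul_le_of_mem_doublyStochastic hW M]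

lemma mul_rowAvg_of_sum_row_eq_one {W : Matrix (Fin n) (Fin n) ℝ} (hW : ∀ i, ∑ j, W i j = 1)
    (M : Matrix (Fin n) (Fin m) ℝ) : W * rowAvg M = rowAvg M := by
  ext i j
  simp only [Matrix.mul_apply, rowAvg, Matrix.of_apply, ← sum_mul, hW, one_mul]

lemma frobSq_rowAvg_le (M : Matrix (Fin n) (Fin m) ℝ) : frobSq (rowAvg M) ≤ frobSq M := by
  simp only [frobSq, rowAvg, Matrix.of_apply, sum_const, card_univ, Fintype.card_fin,
    nsmul_eq_mul]
  rw [mul_sum, sum_comm]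
  gcongr with j _
  have hcs := sq_sum_le_card_mul_sum_sq (s := univ) (f := fun k => M k j)
  rw [card_univ, Fintype.card_fin] at hcs
  rcases eq_or_ne (n : ℝ) 0 with hn | hn
  · simp only [hn, zero_mul]
    positivity
  · calc (n : ℝ) * ((n : ℝ)⁻¹ * ∑ k, M k j) ^ 2 = (n : ℝ)⁻¹ * (∑ k, M k j) ^ 2 := by
          field_simp
      _ ≤ (n : ℝ)⁻¹ * (n * ∑ k, M k j ^ 2) := by gcongr
      _ = ∑ k, M k j ^ 2 := by field_simp

end FrobeniusBounds

lemma frobSq_drift_le {n m : ℕ} {W : Matrix (Fin n) (Fin n) ℝ}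
    (hW : W ∈ doublyStochastic ℝ (Fin n)) {η : ℝ} (hη : |η| ≤ 1)
    (X Y Xtil : Matrix (Fin n) (Fin m) ℝ) :
    frobSq ((1 - η • (1 - W)) * X - η • Y + η • ((1 - W) * (X - Xtil)) - X) ≤
      12 * frobSq (X - rowAvg X) + 3 * η ^ 2 * frobSq Y + 12 * η ^ 2 * frobSq (X - Xtil) := by
  have hη2 : η ^ 2 ≤ 1 := (sq_le_one_iff_abs_le_one η).2 hη
  have hconsensus : (1 - W) * X = (1 - W) * (X - rowAvg X) := by
    rw [Matrix.mul_sub, Matrix.sub_mul 1 W (rowAvg X), Matrix.one_mul,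
      mul_rowAvg_of_sum_row_eq_one (sum_row_of_mem_doublyStochastic hW), sub_self, sub_zero]
  have hsplit : (1 - η • (1 - W)) * X - η • Y + η • ((1 - W) * (X - Xtil)) - X =
      (-η) • ((1 - W) * (X - rowAvg X)) + (-η) • Y + η • ((1 - W) * (X - Xtil)) := by
    rw [← hconsensus, Matrix.sub_mul, Matrix.one_mul, Matrix.smul_mul]
    module
  have hA := mul_le_mul_of_nonneg_left (frobSq_one_sub_mul_le hW (X - rowAvg X)) (sq_nonneg η)
  have hC := mul_le_mul_of_nonneg_left (frobSq_one_sub_mul_le hW (X - Xtil)) (sq_nonneg η)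
  have hη2A := mul_le_mul_of_nonneg_right hη2 (frobSq_nonneg (X - rowAvg X))
  rw [hsplit]
  refine (frobSq_add_add_le _ _ _).trans ?_
  rw [frobSq_smul, frobSq_smul, frobSq_smul, neg_sq]
  linarith

section Integrability

variable {n m : ℕ} {Ω : Type*} [MeasurableSpace Ω]

lemma measurable_frobSq {F : Ω → Matrix (Fin n) (Fin m) ℝ}
    (hF : ∀ i j, Measurable fun ω => F ω i j) : Measurable fun ω => frobSq (F ω) :=
  Finset.measurable_sum _ fun i _ => Finset.measurable_sum _ fun j _ => (hF i j).pow_const 2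

lemma integrable_frobSq_of_le {μ : Measure Ω} {F : Ω → Matrix (Fin n) (Fin m) ℝ} {g : Ω → ℝ}
    (hF : ∀ i j, Measurable fun ω => F ω i j) (hg : Integrable g μ)
    (hle : ∀ ω, frobSq (F ω) ≤ g ω) : Integrable (fun ω => frobSq (F ω)) μ :=
  hg.mono' (measurable_frobSq hF).aestronglyMeasurable <| ae_of_all _ fun ω => by
    rw [Real.norm_of_nonneg (frobSq_nonneg _)]
    exact hle ω

end Integrability

theorem statement14_general {n m : ℕ}
    {Ω : Type*} [MeasurableSpace Ω] (P : Measure Ω)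
    (W : Matrix (Fin n) (Fin n) ℝ)
    (hWnn : ∀ i j, 0 ≤ W i j) (hWsymm : W.transpose = W)
    (hWrow : ∀ i, ∑ j, W i j = 1)
    (η : ℝ) (hη0 : 0 < η) (hη1 : η ≤ 1)
    (ωc : ℝ)
    (X Y H Xtil : Ω → Matrix (Fin n) (Fin m) ℝ)
    (hXmeas : ∀ i j, Measurable fun ω => X ω i j)
    (hXtmeas : ∀ i j, Measurable fun ω => Xtil ω i j)
    (hXint : Integrable (fun ω => frobSq (X ω)) P)
    (hYint : Integrable (fun ω => frobSq (Y ω)) P)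
    (hXtint : Integrable (fun ω => frobSq (Xtil ω)) P)
    (hcomp : ∫ ω, frobSq (X ω - Xtil ω) ∂P ≤ ωc * ∫ ω, frobSq (X ω - H ω) ∂P)
    (Xp : Ω → Matrix (Fin n) (Fin m) ℝ)
    (hXp : ∀ ω, Xp ω = (1 - η • (1 - W)) * X ω - η • Y ω +
      η • ((1 - W) * (X ω - Xtil ω))) :
    ∫ ω, frobSq (Xp ω - X ω) ∂P ≤
      12 * ∫ ω, frobSq (X ω - rowAvg (X ω)) ∂P +
        3 * η ^ 2 * ∫ ω, frobSq (Y ω) ∂P +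
        12 * η ^ 2 * ωc * ∫ ω, frobSq (X ω - H ω) ∂P := by
  have hWrowSt : W ∈ Matrix.rowStochastic ℝ (Fin n) :=
    Matrix.mem_rowStochastic_iff_sum.2 ⟨hWnn, hWrow⟩
  have hW : W ∈ doublyStochastic ℝ (Fin n) :=
    mem_doublyStochastic_iff_mem_rowStochastic_and_mem_colStochastic.2
      ⟨hWrowSt, Matrix.transpose_mem_rowStochastic_iff_mem_colStochastic.1 (hWsymm ▸ hWrowSt)⟩
  have hη : |η| ≤ 1 := abs_le.2 ⟨by linarith, hη1⟩
  have hXavg : Integrable (fun ω => frobSq (X ω - rowAvg (X ω))) P :=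
    integrable_frobSq_of_le (fun i j => (hXmeas i j).sub
        (measurable_const.mul (measurable_sum _ fun k _ => hXmeas k j))) (hXint.const_mul 4)
      fun ω => by linarith [frobSq_sub_le (X ω) (rowAvg (X ω)), frobSq_rowAvg_le (X ω)]
  have hXcomp : Integrable (fun ω => frobSq (X ω - Xtil ω)) P :=
    integrable_frobSq_of_le (fun i j => (hXmeas i j).sub (hXtmeas i j))
      ((hXint.const_mul 2).add (hXtint.const_mul 2)) fun ω => frobSq_sub_le _ _
  calc ∫ ω, frobSq (Xp ω - X ω) ∂P
      ≤ ∫ ω, (12 * frobSq (X ω - rowAvg (X ω)) + 3 * η ^ 2 * frobSq (Y ω) +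
          12 * η ^ 2 * frobSq (X ω - Xtil ω)) ∂P :=
        integral_mono_of_nonneg (ae_of_all _ fun ω => frobSq_nonneg _)
          (((hXavg.const_mul _).add (hYint.const_mul _)).add (hXcomp.const_mul _))
          (ae_of_all _ fun ω => by
            simpa only [hXp] using frobSq_drift_le hW hη (X ω) (Y ω) (Xtil ω))
    _ = 12 * ∫ ω, frobSq (X ω - rowAvg (X ω)) ∂P + 3 * η ^ 2 * ∫ ω, frobSq (Y ω) ∂P +
          12 * η ^ 2 * ∫ ω, frobSq (X ω - Xtil ω) ∂P := by
        rw [integral_add, integral_add, integral_const_mul, integral_const_mul,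
          integral_const_mul]
        exacts [hXavg.const_mul _, hYint.const_mul _,
          (hXavg.const_mul _).add (hYint.const_mul _), hXcomp.const_mul _]
    _ ≤ _ := by
        rw [mul_assoc (12 * η ^ 2) ωc]
        gcongr

/-- One-step drift bound for the compressed decision variable:
with `W_η = I − η(I − W)`, `η ∈ (0,1]`, compression error
`E‖X − X̃‖² ≤ ω E‖X − H‖²`, and `X⁺ = W_η X − η Y + η (I − W)(X − X̃)`:
`E‖X⁺ − X‖² ≤ 12 E‖X − X̄‖² + 3 η² E‖Y‖² + 12 η² ω E‖X − H‖²`. -/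
theorem statement14 {n m : ℕ} (hn : 0 < n)
    {Ω : Type*} [MeasurableSpace Ω] (P : Measure Ω) [IsProbabilityMeasure P]
    (W : Matrix (Fin n) (Fin n) ℝ)
    (hWnn : ∀ i j, 0 ≤ W i j) (hWsymm : W.transpose = W)
    (hWrow : ∀ i, ∑ j, W i j = 1)
    (η : ℝ) (hη0 : 0 < η) (hη1 : η ≤ 1)
    (ωc : ℝ) (hωc : 0 ≤ ωc)
    (X Y H Xtil : Ω → Matrix (Fin n) (Fin m) ℝ)
    (hXmeas : ∀ i j, Measurable fun ω => X ω i j)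
    (hYmeas : ∀ i j, Measurable fun ω => Y ω i j)
    (hHmeas : ∀ i j, Measurable fun ω => H ω i j)
    (hXtmeas : ∀ i j, Measurable fun ω => Xtil ω i j)
    (hXint : Integrable (fun ω => frobSq (X ω)) P)
    (hYint : Integrable (fun ω => frobSq (Y ω)) P)
    (hHint : Integrable (fun ω => frobSq (H ω)) P)
    (hXtint : Integrable (fun ω => frobSq (Xtil ω)) P)
    (hcomp : ∫ ω, frobSq (X ω - Xtil ω) ∂P ≤ ωc * ∫ ω, frobSq (X ω - H ω) ∂P)
    (Xp : Ω → Matrix (Fin n) (Fin m) ℝ)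
    (hXp : ∀ ω, Xp ω = (1 - η • (1 - W)) * X ω - η • Y ω +
      η • ((1 - W) * (X ω - Xtil ω))) :
    ∫ ω, frobSq (Xp ω - X ω) ∂P ≤
      12 * ∫ ω, frobSq (X ω - rowAvg (X ω)) ∂P +
        3 * η ^ 2 * ∫ ω, frobSq (Y ω) ∂P +
        12 * η ^ 2 * ωc * ∫ ω, frobSq (X ω - H ω) ∂P :=
  statement14_general P W hWnn hWsymm hWrow η hη0 hη1 ωc X Y H Xtil hXmeas hXtmeas hXint hYint
    hXtint hcomp Xp hXp
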